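/- Design-weighted posterior covariance invariance: let W ∈ {0,1}^{k×d} be any selection matrix (rows are distinct standard basis vectors of ℝᵈ). For two linear surrogates Fs₁, Fs₂ ∈ ℝᵈˣⁿ of F with BAE statistics as above, the design-dependent BAE posterior covariances (C_{vv}⁻¹ + F̃_iᵀ Wᵀ (W C_{η_i|v} Wᵀ)⁻¹ W F̃_i)⁻¹, i = 1,2, coincide. In particular trace of the two matrices agree, so the A-optimality criterion and hence the A-optimal design are independent of the linearization choice. -/
import Mathlib


open MeasureTheory Matrix

/-- Mean vector of a random vector `f` of the parameter `v` distributed according to `μ`. -/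
noncomputable def mvec {n k : ℕ} (μ : Measure (Fin n → ℝ)) (f : (Fin n → ℝ) → Fin k → ℝ) :
    Fin k → ℝ := fun i => ∫ v, f v i ∂μ

/-- (Cross-)covariance matrix of random vectors `f` and `g` of the parameter `v ∼ μ`. -/
noncomputable def covM {n k l : ℕ} (μ : Measure (Fin n → ℝ))
    (f : (Fin n → ℝ) → Fin k → ℝ) (g : (Fin n → ℝ) → Fin l → ℝ) :
    Matrix (Fin k) (Fin l) ℝ :=
  Matrix.of fun i j => ∫ v, (f v i - mvec μ f i) * (g v j - mvec μ g j) ∂μ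

/-- The BAE-corrected map `F̃ = Fs + C_{εv} C_{vv}⁻¹` for surrogate `Fs` of `F`. -/
noncomputable def tildeF {n d : ℕ} (μ : Measure (Fin n → ℝ)) (F : (Fin n → ℝ) → Fin d → ℝ)
    (Fs : Matrix (Fin d) (Fin n) ℝ) : Matrix (Fin d) (Fin n) ℝ :=
  Fs + covM μ (fun w => F w - Fs.mulVec w) id * (covM μ id id)⁻¹

/-- The BAE total-error covariance `C_{η|v} = C_{ee} + C_{εε} - C_{εv} C_{vv}⁻¹ C_{vε}`. -/
noncomputable def CetaGv {n d : ℕ} (μ : Measure (Fin n → ℝ)) (F : (Fin n → ℝ) → Fin d → ℝ)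
    (Fs : Matrix (Fin d) (Fin n) ℝ) (Cee : Matrix (Fin d) (Fin d) ℝ) :
    Matrix (Fin d) (Fin d) ℝ :=
  Cee + covM μ (fun w => F w - Fs.mulVec w) (fun w => F w - Fs.mulVec w)
    - covM μ (fun w => F w - Fs.mulVec w) id * (covM μ id id)⁻¹
      * (covM μ (fun w => F w - Fs.mulVec w) id)ᵀ

set_option linter.unusedSectionVars false

lemma covM_transpose {n k l : ℕ} (μ : Measure (Fin n → ℝ))
    (f : (Fin n → ℝ) → Fin k → ℝ) (g : (Fin n → ℝ) → Fin l → ℝ) :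
    (covM μ f g)ᵀ = covM μ g f := by
  ext i j
  simp only [covM, transpose_apply, Matrix.of_apply]
  congr 1; ext v; ring

lemma int_centered {n : ℕ} {μ : Measure (Fin n → ℝ)} [IsProbabilityMeasure μ]
    {f g : (Fin n → ℝ) → ℝ} (hf : Integrable f μ) (hg : Integrable g μ)
    (hfg : Integrable (fun v => f v * g v) μ) (a b : ℝ) :
    Integrable (fun v => (f v - a) * (g v - b)) μ := by
  have : (fun v => (f v - a) * (g v - b))
      = fun v => (f v * g v - b * f v) - (a * g v - a * b) := by
    funext v; ring
  rw [this]
  exact ((hfg.sub (hf.const_mul b)).sub ((hg.const_mul a).sub (integrable_const _)))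

lemma mvec_sub_mulVec {n d : ℕ} (μ : Measure (Fin n → ℝ)) [IsProbabilityMeasure μ]
    (F : (Fin n → ℝ) → Fin d → ℝ) (hF : ∀ i, Integrable (fun v => F v i) μ)
    (hv : ∀ i, Integrable (fun v : Fin n → ℝ => v i) μ)
    (M : Matrix (Fin d) (Fin n) ℝ) (i : Fin d) :
    mvec μ (fun w => F w - M.mulVec w) i = mvec μ F i - M.mulVec (mvec μ id) i := by
  simp only [mvec, Pi.sub_apply, Matrix.mulVec, dotProduct, id_eq]
  rw [integral_sub (hF i) ((integrable_finset_sum _ (fun l _ => (hv l).const_mul (M i l))))]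
  congr 1
  rw [integral_finset_sum _ (fun l _ => (hv l).const_mul (M i l))]
  exact Finset.sum_congr rfl (fun l _ => integral_const_mul _ _)

lemma covM_sub_left {n d l : ℕ} (μ : Measure (Fin n → ℝ)) [IsProbabilityMeasure μ]
    (F : (Fin n → ℝ) → Fin d → ℝ) (hF : ∀ i, Integrable (fun v => F v i) μ)
    (hv : ∀ i, Integrable (fun v : Fin n → ℝ => v i) μ)
    (g : (Fin n → ℝ) → Fin l → ℝ) (hg : ∀ j, Integrable (fun v => g v j) μ)
    (hFg : ∀ i j, Integrable (fun v => F v i * g v j) μ)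
    (hvg : ∀ i j, Integrable (fun v : Fin n → ℝ => v i * g v j) μ)
    (M : Matrix (Fin d) (Fin n) ℝ) :
    covM μ (fun w => F w - M.mulVec w) g = covM μ F g - M * covM μ id g := by
  ext i j
  simp only [covM, Matrix.of_apply, Matrix.sub_apply, Matrix.mul_apply]
  rw [mvec_sub_mulVec μ F hF hv M i]
  have hintg : ∀ a : Fin n, Integrable
      (fun v => M i a * ((v a - mvec μ id a) * (g v j - mvec μ g j))) μ :=
    fun a => (int_centered (hv a) (hg j) (hvg a j) _ _).const_mul _
  have key : (fun v => ((F v - M.mulVec v) i - (mvec μ F i - M.mulVec (mvec μ id) i))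
        * (g v j - mvec μ g j))
      = fun v => (F v i - mvec μ F i) * (g v j - mvec μ g j)
        - ∑ a, M i a * ((v a - mvec μ id a) * (g v j - mvec μ g j)) := by
    funext v
    simp only [Pi.sub_apply, Matrix.mulVec, dotProduct, id_eq]
    rw [show (∑ a, M i a * ((v a - mvec μ id a) * (g v j - mvec μ g j)))
        = (∑ a, M i a * v a) * (g v j - mvec μ g j)
          - (∑ a, M i a * mvec μ id a) * (g v j - mvec μ g j) from by
      rw [← sub_mul, ← Finset.sum_sub_distrib, Finset.sum_mul]
      exact Finset.sum_congr rfl fun a _ => by ring]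
    ring
  rw [key, integral_sub (int_centered (hF i) (hg j) (hFg i j) _ _)
    (integrable_finset_sum _ (fun a _ => hintg a)),
    integral_finset_sum _ (fun a _ => hintg a)]
  congr 1
  exact Finset.sum_congr rfl (fun a _ => by
    rw [integral_const_mul]; rfl)



section invariance

variable {n d : ℕ} (μ : Measure (Fin n → ℝ)) [IsProbabilityMeasure μ]
  (F : (Fin n → ℝ) → Fin d → ℝ)
  (hF : ∀ i, Integrable (fun v => F v i) μ)
  (hv : ∀ i, Integrable (fun v : Fin n → ℝ => v i) μ)
  (hFv : ∀ i j, Integrable (fun v => F v i * v j) μ)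
  (hvv : ∀ i j, Integrable (fun v : Fin n → ℝ => v i * v j) μ)
  (hFF : ∀ i j, Integrable (fun v => F v i * F v j) μ)

include hF hv hFv hvv hFF

lemma covM_eps_id (M : Matrix (Fin d) (Fin n) ℝ) :
    covM μ (fun w => F w - M.mulVec w) id = covM μ F id - M * covM μ id id :=
  covM_sub_left μ F hF hv id hv hFv hvv M

lemma covM_eps_F (M : Matrix (Fin d) (Fin n) ℝ) :
    covM μ (fun w => F w - M.mulVec w) F = covM μ F F - M * covM μ id F :=
  covM_sub_left μ F hF hv F hF hFF (fun i j => by simpa [mul_comm] using hFv j i) M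

lemma covM_eps_eps (M : Matrix (Fin d) (Fin n) ℝ) :
    covM μ (fun w => F w - M.mulVec w) (fun w => F w - M.mulVec w)
      = covM μ F (fun w => F w - M.mulVec w)
        - M * covM μ id (fun w => F w - M.mulVec w) := by
  have heps : ∀ j, Integrable (fun v => (fun w => F w - M.mulVec w) v j) μ := by
    intro j
    simp only [Pi.sub_apply]
    refine (hF j).sub ?_
    have : (fun v : Fin n → ℝ => (M.mulVec v) j) = fun v => ∑ l, M j l * v l := by
      funext v; rfl
    rw [this]
    exact integrable_finset_sum _ (fun l _ => (hv l).const_mul (M j l))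
  have hFeps : ∀ i j, Integrable (fun v => F v i * (fun w => F w - M.mulVec w) v j) μ := by
    intro i j
    have : (fun v => F v i * (fun w => F w - M.mulVec w) v j)
        = fun v => F v i * F v j - ∑ l, M j l * (F v i * v l) := by
      funext v
      simp only [Pi.sub_apply, Matrix.mulVec, dotProduct, mul_sub, Finset.mul_sum]
      congr 1
      exact Finset.sum_congr rfl fun l _ => by ring
    rw [this]
    exact (hFF i j).sub (integrable_finset_sum _
      (fun l _ => ((hFv i l).const_mul (M j l))))
  have hveps : ∀ i j, Integrable (fun v : Fin n → ℝ => v i * (fun w => F w - M.mulVec w) v j) μ := by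
    intro i j
    have : (fun v : Fin n → ℝ => v i * (fun w => F w - M.mulVec w) v j)
        = fun v => F v j * v i - ∑ l, M j l * (v i * v l) := by
      funext v
      simp only [Pi.sub_apply, Matrix.mulVec, dotProduct, mul_sub, Finset.mul_sum]
      congr 1
      · ring
      · exact Finset.sum_congr rfl fun l _ => by ring
    rw [this]
    exact (hFv j i).sub (integrable_finset_sum _
      (fun l _ => ((hvv i l).const_mul (M j l))))
  exact covM_sub_left μ F hF hv _ heps hFeps hveps M

lemma tildeF_eq (hCvv : IsUnit (covM μ id id).det) (M : Matrix (Fin d) (Fin n) ℝ) :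
    tildeF μ F M = covM μ F id * (covM μ id id)⁻¹ := by
  rw [tildeF, covM_eps_id μ F hF hv hFv hvv hFF M, Matrix.sub_mul, Matrix.mul_assoc,
    Matrix.mul_nonsing_inv _ hCvv, Matrix.mul_one]
  abel

lemma CetaGv_eq (hCvv : IsUnit (covM μ id id).det)
    (Cee : Matrix (Fin d) (Fin d) ℝ) (M : Matrix (Fin d) (Fin n) ℝ) :
    CetaGv μ F M Cee = Cee + covM μ F F
      - covM μ F id * (covM μ id id)⁻¹ * (covM μ F id)ᵀ := by
  set A := covM μ F id with hA
  set B := covM μ id id with hB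
  set K := covM μ F F with hK
  have hBsymm : Bᵀ = B := covM_transpose μ id id
  have hKsymm : Kᵀ = K := covM_transpose μ F F
  have h1 : B * B⁻¹ = 1 := Matrix.mul_nonsing_inv _ hCvv
  have h2 : B⁻¹ * B = 1 := Matrix.nonsing_inv_mul _ hCvv
  have hidF : covM μ id F = Aᵀ := by rw [hA, ← covM_transpose]
  have hFeps : covM μ F (fun w => F w - M.mulVec w) = K - A * Mᵀ := by
    have := congrArg Matrix.transpose (covM_eps_F μ F hF hv hFv hvv hFF M)
    rw [covM_transpose] at this
    rw [this, Matrix.transpose_sub, hKsymm, Matrix.transpose_mul, hidF,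
      Matrix.transpose_transpose]
  have hideps : covM μ id (fun w => F w - M.mulVec w) = Aᵀ - B * Mᵀ := by
    have := congrArg Matrix.transpose (covM_eps_id μ F hF hv hFv hvv hFF M)
    rw [covM_transpose] at this
    rw [this, Matrix.transpose_sub, Matrix.transpose_mul, hBsymm]
  rw [CetaGv, covM_eps_eps μ F hF hv hFv hvv hFF M, hFeps, hideps,
    covM_eps_id μ F hF hv hFv hvv hFF M]
  have e1 : (A - M * B) * B⁻¹ * (A - M * B)ᵀ
      = A * B⁻¹ * Aᵀ - A * Mᵀ - M * Aᵀ + M * B * Mᵀ := by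
    rw [Matrix.transpose_sub, Matrix.transpose_mul, hBsymm]
    have hMB : M * B * B⁻¹ = M := by rw [Matrix.mul_assoc, h1, Matrix.mul_one]
    have hAB : A * B⁻¹ * (B * Mᵀ) = A * Mᵀ := by
      rw [Matrix.mul_assoc, ← Matrix.mul_assoc B⁻¹ B, h2, Matrix.one_mul]
    have hMBB : M * B * B⁻¹ * (B * Mᵀ) = M * B * Mᵀ := by
      rw [hMB, ← Matrix.mul_assoc]
    rw [Matrix.sub_mul, Matrix.sub_mul, Matrix.mul_sub, Matrix.mul_sub, hMB, hAB, ← Matrix.mul_assoc M B Mᵀ]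
    abel
  rw [e1, Matrix.mul_sub, ← Matrix.mul_assoc]
  abel

end invariance

/-- The design-weighted BAE posterior covariance, and hence the A-optimality criterion,
is independent of the choice of linear surrogate. -/
theorem design_posterior_covariance_invariance {n d k : ℕ} (μ : Measure (Fin n → ℝ))
    [IsProbabilityMeasure μ] (F : (Fin n → ℝ) → Fin d → ℝ)
    (hF : ∀ i, Integrable (fun v => F v i) μ)
    (hv : ∀ i, Integrable (fun v : Fin n → ℝ => v i) μ)
    (hFv : ∀ i j, Integrable (fun v => F v i * v j) μ)
    (hvv : ∀ i j, Integrable (fun v : Fin n → ℝ => v i * v j) μ)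
    (hFF : ∀ i j, Integrable (fun v => F v i * F v j) μ)
    (hCvv : IsUnit (covM μ id id).det)
    (Cee : Matrix (Fin d) (Fin d) ℝ) (hCee : Cee.PosDef)
    (W : Matrix (Fin k) (Fin d) ℝ)
    (hW : ∃ f : Fin k → Fin d, Function.Injective f ∧ ∀ i j, W i j = if f i = j then 1 else 0)
    (Fs₁ Fs₂ : Matrix (Fin d) (Fin n) ℝ)
    (hinv₁ : IsUnit (W * CetaGv μ F Fs₁ Cee * Wᵀ).det)
    (hinv₂ : IsUnit (W * CetaGv μ F Fs₂ Cee * Wᵀ).det) :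
    ((covM μ id id)⁻¹ + (tildeF μ F Fs₁)ᵀ * Wᵀ * (W * CetaGv μ F Fs₁ Cee * Wᵀ)⁻¹ * W
        * tildeF μ F Fs₁)⁻¹
      = ((covM μ id id)⁻¹ + (tildeF μ F Fs₂)ᵀ * Wᵀ * (W * CetaGv μ F Fs₂ Cee * Wᵀ)⁻¹ * W
          * tildeF μ F Fs₂)⁻¹
    ∧ (((covM μ id id)⁻¹ + (tildeF μ F Fs₁)ᵀ * Wᵀ * (W * CetaGv μ F Fs₁ Cee * Wᵀ)⁻¹ * W
          * tildeF μ F Fs₁)⁻¹).trace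
        = (((covM μ id id)⁻¹ + (tildeF μ F Fs₂)ᵀ * Wᵀ * (W * CetaGv μ F Fs₂ Cee * Wᵀ)⁻¹ * W
            * tildeF μ F Fs₂)⁻¹).trace := by
  have ht : tildeF μ F Fs₁ = tildeF μ F Fs₂ := by
    rw [tildeF_eq μ F hF hv hFv hvv hFF hCvv, tildeF_eq μ F hF hv hFv hvv hFF hCvv]
  have hc : CetaGv μ F Fs₁ Cee = CetaGv μ F Fs₂ Cee := by
    rw [CetaGv_eq μ F hF hv hFv hvv hFF hCvv, CetaGv_eq μ F hF hv hFv hvv hFF hCvv]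
  rw [ht, hc]
  exact ⟨rfl, rfl⟩
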